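/- arXiv:2511.19625 — 4 statements merged into one kernel-verified Lean document; each statement's English description precedes it below -/
import Mathlib

section
/- Let X, Y be real symmetric n×n matrices and ζ, η ∈ ℝⁿ. Then det(λI − X − tζζᵀ) = det(λI − Y − tηηᵀ) for all λ, t ∈ ℝ if and only if there exists a real orthogonal n×n matrix Q with Q X Qᵀ = Y and Q ζ = η. -/
/-!
Setting `t = 0` shows that `X` and `Y` have the same characteristic polynomial, hence the same
sorted eigenvalues, so by the spectral theorem both pairs are orthogonally similar to pairs
`(D, a)` and `(D, b)` with the same diagonal `D = diag(d)`. Off the spectrum, the matrix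
determinant lemma gives `det(λ - D - t aaᵀ) = ∏ (λ - dᵢ) · (1 - t ∑ aᵢ² / (λ - dᵢ))`, and uniqueness
of partial fractions turns the equality of these rational functions into `‖a‖ = ‖b‖` on every
eigenspace of `D`. The product of the Householder reflections along the eigenspace components of
`a - b` then commutes with `D` and maps `a` to `b`.
-/

open Matrix Finset

section Algebraic

variable {R : Type*} [CommRing R] {m : Type*} [Fintype m]

theorem conj_vecMulVec {l : Type*} (Q : Matrix l m R) (a b : m → R) :
    Q * vecMulVec a b * Qᵀ = vecMulVec (Q *ᵥ a) (Q *ᵥ b) := by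
  rw [mul_vecMulVec, vecMulVec_mul, vecMul_transpose]

variable [DecidableEq m]

def OrthSimilar (X : Matrix m m R) (ζ : m → R) (Y : Matrix m m R) (η : m → R) : Prop :=
  ∃ Q : Matrix m m R, Qᵀ * Q = 1 ∧ Q * X * Qᵀ = Y ∧ Q *ᵥ ζ = η

noncomputable def phiDet (X : Matrix m m R) (ζ : m → R) (lam t : R) : R :=
  (lam • (1 : Matrix m m R) - X - t • vecMulVec ζ ζ).det

theorem det_one_add_vecMulVec (u v : m → R) : (1 + vecMulVec u v).det = 1 + v ⬝ᵥ u := by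
  rw [vecMulVec_eq Unit, det_one_add_replicateCol_mul_replicateRow]

theorem eval_charpoly_eq_phiDet (X : Matrix m m R) (ζ : m → R) (lam : R) :
    X.charpoly.eval lam = phiDet X ζ lam 0 := by
  rw [eval_charpoly, phiDet, zero_smul, sub_zero, scalar_apply, smul_one_eq_diagonal]

namespace OrthSimilar

variable {X Y Z : Matrix m m R} {ζ η θ : m → R}

theorem symm (h : OrthSimilar X ζ Y η) : OrthSimilar Y η X ζ := by
  obtain ⟨Q, hQ, rfl, rfl⟩ := h
  have hQ' : Q * Qᵀ = 1 := mul_eq_one_comm.mp hQ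
  refine ⟨Qᵀ, by rw [transpose_transpose, hQ'], ?_, ?_⟩
  · rw [transpose_transpose, ← Matrix.mul_assoc, ← Matrix.mul_assoc, hQ, Matrix.one_mul,
      Matrix.mul_assoc, hQ, Matrix.mul_one]
  · rw [mulVec_mulVec, hQ, one_mulVec]

theorem trans (h₁ : OrthSimilar X ζ Y η) (h₂ : OrthSimilar Y η Z θ) : OrthSimilar X ζ Z θ := by
  obtain ⟨P, hP, rfl, rfl⟩ := h₁
  obtain ⟨Q, hQ, rfl, rfl⟩ := h₂
  refine ⟨Q * P, ?_, ?_, mulVec_mulVec _ _ _ |>.symm⟩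
  · rw [transpose_mul, Matrix.mul_assoc, ← Matrix.mul_assoc Qᵀ, hQ, Matrix.one_mul, hP]
  · simp only [transpose_mul, Matrix.mul_assoc]

theorem phiDet_eq (h : OrthSimilar X ζ Y η) (lam t : R) : phiDet X ζ lam t = phiDet Y η lam t := by
  obtain ⟨Q, hQ, rfl, rfl⟩ := h
  have hQ' : Q * Qᵀ = 1 := mul_eq_one_comm.mp hQ
  have hconj : lam • 1 - Q * X * Qᵀ - t • vecMulVec (Q *ᵥ ζ) (Q *ᵥ ζ) =
      Q * (lam • 1 - X - t • vecMulVec ζ ζ) * Qᵀ := by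
    rw [← conj_vecMulVec, Matrix.mul_sub, Matrix.sub_mul, Matrix.mul_sub, Matrix.sub_mul,
      Matrix.mul_smul, Matrix.smul_mul, Matrix.mul_one, hQ', Matrix.mul_smul, Matrix.smul_mul]
  rw [phiDet, phiDet, hconj, det_mul, det_mul, mul_right_comm, ← det_mul, hQ', det_one, one_mul]

end OrthSimilar

end Algebraic

section Diagonal

variable {K : Type*} [Field K] {m : Type*} [Fintype m] [DecidableEq m]

theorem phiDet_diagonal {d : m → K} {lam : K} (hlam : ∀ i, lam ≠ d i) (a : m → K) (t : K) :
    phiDet (diagonal d) a lam t = (∏ i, (lam - d i)) * (1 - t * ∑ i, a i ^ 2 / (lam - d i)) := by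
  have hv : ∀ i, lam - d i ≠ 0 := fun i => sub_ne_zero.2 (hlam i)
  have hx : diagonal (fun i => lam - d i) *ᵥ (fun i => -t * a i / (lam - d i)) = -t • a := by
    ext i
    simp only [mulVec_diagonal, Pi.smul_apply, smul_eq_mul]
    field_simp [hv i]
  have hfactor : lam • 1 - diagonal d - t • vecMulVec a a =
      diagonal (fun i => lam - d i) * (1 + vecMulVec (fun i => -t * a i / (lam - d i)) a) := by
    rw [Matrix.mul_add, Matrix.mul_one, mul_vecMulVec, hx, smul_vecMulVec, neg_smul,
      ← sub_eq_add_neg, smul_one_eq_diagonal, diagonal_sub]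
  rw [phiDet, hfactor, det_mul, det_diagonal, det_one_add_vecMulVec]
  congr 1
  simp only [dotProduct, mul_sum, sub_eq_add_neg, ← sum_neg_distrib]
  congr 1
  exact sum_congr rfl fun i _ => by ring

open Polynomial in
theorem sum_fiber_eq_zero_of_sum_div_sub_eq_zero [Infinite K] [DecidableEq K]
    {ι : Type*} [Fintype ι] {d c : ι → K} (h : ∀ lam ∉ Set.range d, ∑ i, c i / (lam - d i) = 0)
    (i₀ : ι) :
    ∑ i with d i = d i₀, c i = 0 := by
  set S := univ.image d
  -- Clearing the denominators `λ - ρ`, `ρ ∈ S`, gives a polynomial vanishing off `range d`;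
  -- at the node `d i₀` only the fiber of `i₀` survives.
  have hmem : ∀ i, d i ∈ S := fun i => mem_image_of_mem d (mem_univ i)
  have hP : ∑ i, C (c i) * ∏ ρ ∈ S.erase (d i), (X - C ρ) = 0 := by
    refine eq_zero_of_infinite_isRoot _ <|
      (Set.finite_range d).infinite_compl.mono fun lam hlam => ?_
    have hterm : ∀ i, c i * ∏ ρ ∈ S.erase (d i), (lam - ρ) =
        (∏ ρ ∈ S, (lam - ρ)) * (c i / (lam - d i)) := fun i => by
      have : lam - d i ≠ 0 := sub_ne_zero.2 fun he => hlam ⟨i, he.symm⟩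
      rw [← mul_prod_erase S _ (hmem i)]
      field_simp
    simp [eval_finsetSum, eval_prod, hterm, ← mul_sum, h lam hlam]
  have hμ := congrArg (eval (d i₀)) hP
  simp only [eval_finsetSum, eval_mul, eval_C, eval_prod, eval_sub, eval_X, eval_zero] at hμ
  have hnode : ∀ i, c i * ∏ ρ ∈ S.erase (d i), (d i₀ - ρ) =
      if d i = d i₀ then c i * ∏ ρ ∈ S.erase (d i₀), (d i₀ - ρ) else 0 := fun i => by
    split_ifs with hi
    · rw [hi]
    · rw [prod_eq_zero (mem_erase.2 ⟨Ne.symm hi, hmem i₀⟩) (sub_self _), mul_zero]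
  rw [sum_congr rfl fun i _ => hnode i, ← sum_filter, ← sum_mul] at hμ
  exact (mul_eq_zero.1 hμ).resolve_right <|
    prod_ne_zero_iff.2 fun ρ hρ => sub_ne_zero.2 (ne_of_mem_erase hρ).symm

end Diagonal

section Householder

variable {m : Type*} [Fintype m] [DecidableEq m] {ι : Type*}

/-- The product of the Householder reflections along pairwise orthogonal vectors `u k`;
a zero `u k` contributes nothing, as `2 / 0 = 0`. -/
noncomputable def householder (s : Finset ι) (u : ι → m → ℝ) : Matrix m m ℝ :=
  1 - ∑ k ∈ s, (2 / (u k ⬝ᵥ u k)) • vecMulVec (u k) (u k)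

variable {s : Finset ι} {u : ι → m → ℝ}

theorem householder_transpose : (householder s u)ᵀ = householder s u := by
  simp [householder, transpose_sum, transpose_vecMulVec]

theorem householder_mul_self (hu : (s : Set ι).Pairwise fun k l => u k ⬝ᵥ u l = 0) :
    householder s u * householder s u = 1 := by
  set F := ∑ k ∈ s, (2 / (u k ⬝ᵥ u k)) • vecMulVec (u k) (u k)
  have hFF : F * F = F + F := by
    simp only [F, sum_mul_sum, smul_mul_smul_comm, vecMulVec_mul_vecMulVec, ← sum_add_distrib]
    refine sum_congr rfl fun k hk => ?_
    rw [sum_eq_single k (fun l hl hlk => by rw [hu hk hl hlk.symm, zero_smul, vecMulVec_zero,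
      smul_zero]) (absurd hk), vecMulVec_smul, smul_smul, ← add_smul]
    congr 1
    rcases eq_or_ne (u k ⬝ᵥ u k) 0 with h0 | h0
    · simp [h0]
    · field_simp; ring
  rw [householder, sub_mul, mul_sub, mul_sub, Matrix.one_mul, Matrix.mul_one, Matrix.one_mul, hFF]
  abel

theorem householder_mulVec (hu : (s : Set ι).Pairwise fun k l => u k ⬝ᵥ u l = 0) {a b : m → ℝ}
    (hsum : ∑ k ∈ s, u k = a - b) (hab : ∀ k ∈ s, u k ⬝ᵥ (a + b) = 0) :
    householder s u *ᵥ a = b := by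
  have hcoef : ∀ k ∈ s, (2 / (u k ⬝ᵥ u k) * (u k ⬝ᵥ a)) • u k = u k := by
    intro k hk
    rcases eq_or_ne (u k) 0 with h0 | h0
    · rw [h0, smul_zero]
    have hN : u k ⬝ᵥ u k ≠ 0 := dotProduct_self_eq_zero.not.2 h0
    have hsub : u k ⬝ᵥ (a - b) = u k ⬝ᵥ u k := by
      rw [← hsum, dotProduct_sum, sum_eq_single k (fun l hl hlk => hu hk hl hlk.symm) (absurd hk)]
    have hadd := hab k hk
    rw [dotProduct_sub] at hsub
    rw [dotProduct_add] at hadd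
    rw [show 2 / (u k ⬝ᵥ u k) * (u k ⬝ᵥ a) = 1 by field_simp; linarith, one_smul]
  simp only [householder, sub_mulVec, one_mulVec, sum_mulVec, smul_mulVec, vecMulVec_mulVec,
    op_smul_eq_smul, smul_smul]
  rw [sum_congr rfl hcoef, hsum, sub_sub_cancel]

theorem householder_commute {A : Matrix m m ℝ} (hA : A.IsSymm) {μ : ι → ℝ}
    (hu : ∀ k ∈ s, A *ᵥ u k = μ k • u k) : Commute (householder s u) A := by
  refine (Commute.one_left A).sub_left (Commute.sum_left _ _ _ fun k hk => ?_)
  refine Commute.smul_left ?_ _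
  have hvec : u k ᵥ* A = A *ᵥ u k := by rw [← vecMul_transpose, hA.eq]
  rw [Commute, SemiconjBy, vecMulVec_mul, mul_vecMulVec, hvec, hu k hk, vecMulVec_smul,
    smul_vecMulVec]

end Householder

section Real

variable {m : Type*} [Fintype m] [DecidableEq m]

theorem orthSimilar_diagonal_of_sum_fiber_sq_eq {d a b : m → ℝ}
    (h : ∀ i₀, ∑ i with d i = d i₀, (a i ^ 2 - b i ^ 2) = 0) :
    OrthSimilar (diagonal d) a (diagonal d) b := by
  set u : ℝ → m → ℝ := fun μ i => if d i = μ then a i - b i else 0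
  set s := univ.image d
  have hpair : (s : Set ℝ).Pairwise fun μ ν => u μ ⬝ᵥ u ν = 0 := by
    intro μ _ ν _ hμν
    refine sum_eq_zero fun i _ => ?_
    by_cases hi : d i = μ
    · simp [u, hi, hμν]
    · simp [u, hi]
  have hsum : ∑ μ ∈ s, u μ = a - b := by
    ext i
    simp [u, Finset.sum_apply, s]
  have hab : ∀ μ ∈ s, u μ ⬝ᵥ (a + b) = 0 := by
    simp only [s, mem_image, mem_univ, true_and]
    rintro _ ⟨i₀, rfl⟩
    rw [← h i₀, sum_filter]
    refine sum_congr rfl fun i _ => ?_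
    by_cases hi : d i = d i₀
    · simp only [hi, ↓reduceIte, Pi.add_apply, u]
      ring
    · simp [u, hi]
  have heig : ∀ μ ∈ s, diagonal d *ᵥ u μ = μ • u μ := by
    intro μ _
    ext i
    by_cases hi : d i = μ <;> simp [u, mulVec_diagonal, hi]
  have hW := householder_mul_self hpair
  refine ⟨householder s u, by rw [householder_transpose, hW], ?_,
    householder_mulVec hpair hsum hab⟩
  rw [(householder_commute (isSymm_diagonal d) heig).eq, Matrix.mul_assoc, householder_transpose,
    hW, Matrix.mul_one]

theorem orthSimilar_diagonal_of_phiDet_eq {d a b : m → ℝ}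
    (h : ∀ lam t, phiDet (diagonal d) a lam t = phiDet (diagonal d) b lam t) :
    OrthSimilar (diagonal d) a (diagonal d) b := by
  refine orthSimilar_diagonal_of_sum_fiber_sq_eq fun i₀ =>
    sum_fiber_eq_zero_of_sum_div_sub_eq_zero (fun lam hlam => ?_) i₀
  have hne : ∀ i, lam ≠ d i := fun i he => hlam ⟨i, he.symm⟩
  have hprod : ∏ i, (lam - d i) ≠ 0 := prod_ne_zero_iff.2 fun i _ => sub_ne_zero.2 (hne i)
  have h₁ := h lam 1
  rw [phiDet_diagonal hne, phiDet_diagonal hne, mul_right_inj' hprod] at h₁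
  simp only [sub_div, sum_sub_distrib]
  linarith

theorem Matrix.IsHermitian.exists_orthSimilar_diagonal {X : Matrix m m ℝ} (hX : X.IsHermitian)
    (ζ : m → ℝ) : ∃ a, OrthSimilar (diagonal hX.eigenvalues) a X ζ := by
  set U : Matrix m m ℝ := (hX.eigenvectorUnitary : Matrix m m ℝ)
  have hU : Uᵀ * U = 1 := (mem_orthogonalGroup_iff' _ _).1 hX.eigenvectorUnitary.2
  have hU' : U * Uᵀ = 1 := (mem_orthogonalGroup_iff _ _).1 hX.eigenvectorUnitary.2
  refine ⟨Uᵀ *ᵥ ζ, U, hU, ?_, by rw [mulVec_mulVec, hU', one_mulVec]⟩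
  simpa [U, star_eq_conjTranspose] using hX.spectral_theorem.symm

end Real

/-- **Lemma (Johnson–Newman type characterization).** Real symmetric pairs `(X, ζ)` and `(Y, η)`
are Φ-cospectral, i.e. `det(λI − X − tζζᵀ) = det(λI − Y − tηηᵀ)` for all real `λ, t`, if and
only if there exists an orthogonal matrix `Q` with `Q X Qᵀ = Y` and `Q ζ = η`. -/
theorem phi_cospectral_iff_orthogonal
    {n : ℕ} (X Y : Matrix (Fin n) (Fin n) ℝ) (ζ η : Fin n → ℝ)
    (hXsymm : X.IsSymm) (hYsymm : Y.IsSymm) :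
    (∀ lam t : ℝ,
      (lam • (1 : Matrix (Fin n) (Fin n) ℝ) - X - t • vecMulVec ζ ζ).det =
      (lam • (1 : Matrix (Fin n) (Fin n) ℝ) - Y - t • vecMulVec η η).det) ↔
    (∃ Q : Matrix (Fin n) (Fin n) ℝ, Qᵀ * Q = 1 ∧ Q * X * Qᵀ = Y ∧ Q *ᵥ ζ = η) := by
  change (∀ lam t, phiDet X ζ lam t = phiDet Y η lam t) ↔ OrthSimilar X ζ Y η
  refine ⟨fun h => ?_, fun h => h.phiDet_eq⟩
  have hX : X.IsHermitian := isHermitian_iff_isSymm.2 hXsymm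
  have hY : Y.IsHermitian := isHermitian_iff_isSymm.2 hYsymm
  have hspec : hX.eigenvalues = hY.eigenvalues :=
    (hX.eigenvalues_eq_eigenvalues_iff hY).2 <| Polynomial.funext fun lam => by
      rw [eval_charpoly_eq_phiDet X ζ, eval_charpoly_eq_phiDet Y η, h]
  obtain ⟨a, hXa⟩ := hX.exists_orthSimilar_diagonal ζ
  obtain ⟨b, hYb⟩ := hY.exists_orthSimilar_diagonal η
  rw [← hspec] at hYb
  have hab : OrthSimilar (diagonal hX.eigenvalues) a (diagonal hX.eigenvalues) b :=
    orthSimilar_diagonal_of_phiDet_eq fun lam t => by rw [hXa.phiDet_eq, hYb.phiDet_eq, h]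
  exact hXa.symm.trans (hab.trans hYb)
end

section
/- Let X, Y be real symmetric n×n matrices and ζ, η ∈ ℝⁿ with det(λI − X − tζζᵀ) = det(λI − Y − tηηᵀ) for all λ, t ∈ ℝ. Then for every real number μ, the norm of the orthogonal projection of ζ onto the eigenspace ker(X − μI) equals the norm of the orthogonal projection of η onto the eigenspace ker(Y − μI). -/
/-!
Putting `t = 0` shows that `X` and `Y` have the same characteristic polynomial. Off the spectrum,
the matrix determinant lemma writes `det(λ - X - tζζᵀ)` as `det(λ - X) (1 - t ζᵀ(λ - X)⁻¹ζ)`, so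
the resolvent forms `ζᵀ(λ - X)⁻¹ζ` and `ηᵀ(λ - Y)⁻¹η` agree. In an orthonormal eigenbasis `uᵢ` of
`X` the first one is `∑ᵢ ⟪uᵢ, ζ⟫² / (λ - λᵢ)`, whose residue at `μ`, the limit of
`(λ - μ) ζᵀ(λ - X)⁻¹ζ` as `λ → μ`, is `∑_{λᵢ = μ} ⟪uᵢ, ζ⟫² = ‖P_μ ζ‖²`.
-/

open Matrix Filter Topology
open scoped RealInnerProductSpace

theorem Matrix.det_add_vecMulVec {m R : Type*} [Fintype m] [DecidableEq m] [CommRing R]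
    {A : Matrix m m R} (hA : IsUnit A.det) (u v : m → R) :
    (A + vecMulVec u v).det = A.det * (1 + v ⬝ᵥ A⁻¹ *ᵥ u) := by
  rw [vecMulVec_eq Unit, det_add_replicateCol_mul_replicateRow hA, Matrix.mul_assoc,
    ← replicateCol_mulVec, det_unique (1 + _ : Matrix Unit Unit R), add_apply, one_apply_eq,
    replicateRow_mul_replicateCol_apply]

def Matrix.PhiCospectral {m R : Type*} [Fintype m] [DecidableEq m] [CommRing R]
    (X : Matrix m m R) (ζ : m → R) (Y : Matrix m m R) (η : m → R) : Prop :=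
  ∀ lam t : R, (lam • (1 : Matrix m m R) - X - t • vecMulVec ζ ζ).det =
    (lam • (1 : Matrix m m R) - Y - t • vecMulVec η η).det

namespace Matrix.PhiCospectral

variable {m R : Type*} [Fintype m] [DecidableEq m] [CommRing R] {X Y : Matrix m m R}
  {ζ η : m → R}

theorem det_smul_one_sub_eq (h : PhiCospectral X ζ Y η) (x : R) :
    (x • (1 : Matrix m m R) - X).det = (x • (1 : Matrix m m R) - Y).det := by
  simpa using h x 0

theorem dotProduct_inv_mulVec_eq (h : PhiCospectral X ζ Y η) {x : R}
    (hx : IsUnit (x • (1 : Matrix m m R) - X).det) :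
    ζ ⬝ᵥ (x • 1 - X)⁻¹ *ᵥ ζ = η ⬝ᵥ (x • 1 - Y)⁻¹ *ᵥ η := by
  have hy : IsUnit (x • (1 : Matrix m m R) - Y).det := h.det_smul_one_sub_eq x ▸ hx
  have hrank_one (A : Matrix m m R) (u : m → R) :
      A - (1 : R) • vecMulVec u u = A + vecMulVec (-u) u := by
    rw [one_smul, neg_vecMulVec, sub_eq_add_neg]
  have hrank_one_det := h x 1
  rw [hrank_one, hrank_one, det_add_vecMulVec hx, det_add_vecMulVec hy,
    ← h.det_smul_one_sub_eq x] at hrank_one_det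
  simpa [mulVec_neg] using hx.mul_left_cancel hrank_one_det

end Matrix.PhiCospectral

theorem Matrix.eventually_isUnit_det_smul_one_sub {m K : Type*} [Fintype m] [DecidableEq m]
    [Field K] [TopologicalSpace K] [T1Space K] (A : Matrix m m K) (μ : K) :
    ∀ᶠ x in 𝓝[≠] μ, IsUnit (x • (1 : Matrix m m K) - A).det := by
  filter_upwards
    [A.finite_spectrum.eventually_cofinite_notMem.filter_mono (nhdsNE_le_cofinite μ)] with x hx
  rwa [spectrum.notMem_iff, Algebra.algebraMap_eq_smul_one, isUnit_iff_isUnit_det] at hx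

theorem Module.End.eigenspace_eq_ker_sub_smul_id {R M : Type*} [CommRing R] [AddCommGroup M]
    [Module R M] (f : Module.End R M) (μ : R) :
    f.eigenspace μ = LinearMap.ker (f - μ • LinearMap.id) := by
  rw [eigenspace_def]
  rfl

theorem tendsto_sub_mul_sum_div_sub {ι 𝕜 : Type*} [Fintype ι] [NormedField 𝕜] [DecidableEq 𝕜]
    (a ev : ι → 𝕜) (μ : 𝕜) :
    Tendsto (fun x => (x - μ) * ∑ i, a i / (x - ev i)) (𝓝[≠] μ)
      (𝓝 (∑ i with ev i = μ, a i)) := by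
  simp_rw [Finset.mul_sum, Finset.sum_filter]
  refine tendsto_finsetSum _ fun i _ => ?_
  split_ifs with h
  · refine tendsto_const_nhds.congr' ?_
    filter_upwards [self_mem_nhdsWithin] with x hx
    rw [h, mul_div_cancel₀ _ (sub_ne_zero.mpr hx)]
  · refine tendsto_nhdsWithin_of_tendsto_nhds ?_
    have hcont : ContinuousAt (fun x => (x - μ) * (a i / (x - ev i))) μ := by
      fun_prop (disch := exact sub_ne_zero.mpr (Ne.symm h))
    simpa using hcont.tendsto

theorem OrthonormalBasis.norm_sq_orthogonalProjectionOnto {ι E : Type*} [Fintype ι]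
    [NormedAddCommGroup E] [InnerProductSpace ℝ E] (b : OrthonormalBasis ι ℝ E)
    (K : Submodule ℝ E) [K.HasOrthogonalProjection] (s : Finset ι)
    (hmem : ∀ i ∈ s, b i ∈ K) (horth : ∀ i ∉ s, b i ∈ Kᗮ) (x : E) :
    ‖(K.orthogonalProjectionOnto x : E)‖ ^ 2 = ∑ i ∈ s, ⟪b i, x⟫ ^ 2 := by
  rw [← K.starProjection_apply, ← b.sum_sq_inner_right]
  simp_rw [← K.inner_starProjection_left_eq_right]
  refine (Finset.sum_subset (Finset.subset_univ s) fun i _ hi => ?_).symm.trans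
    (Finset.sum_congr rfl fun i hi => ?_)
  · rw [K.starProjection_apply, K.orthogonalProjectionOnto_eq_zero_iff.mpr (horth i hi),
      Submodule.coe_zero, inner_zero_left, sq, zero_mul]
  · rw [K.starProjection_eq_self_iff.mpr (hmem i hi)]

namespace Matrix.IsHermitian

variable {ι : Type*} [Fintype ι] [DecidableEq ι] {X : Matrix ι ι ℝ} (hX : X.IsHermitian)
theorem toEuclideanLin_eigenvectorBasis (i : ι) :
    X.toEuclideanLin (hX.eigenvectorBasis i) = hX.eigenvalues i • hX.eigenvectorBasis i := by
  ext j
  simpa [toLpLin_apply] using congrFun (hX.mulVec_eigenvectorBasis i) j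

theorem eigenvectorBasis_mem_eigenspace (i : ι) :
    hX.eigenvectorBasis i ∈ Module.End.eigenspace X.toEuclideanLin (hX.eigenvalues i) :=
  Module.End.mem_eigenspace_iff.mpr (hX.toEuclideanLin_eigenvectorBasis i)

theorem eigenvectorBasis_mem_orthogonal_eigenspace {i : ι} {μ : ℝ} (h : hX.eigenvalues i ≠ μ) :
    hX.eigenvectorBasis i ∈ (Module.End.eigenspace X.toEuclideanLin μ)ᗮ :=
  ((isSymmetric_toEuclideanLin_iff.mpr hX).orthogonalFamily_eigenspaces.isOrtho h).le
    (hX.eigenvectorBasis_mem_eigenspace i)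

theorem norm_sq_orthogonalProjectionOnto_eigenspace (μ : ℝ) (x : EuclideanSpace ℝ ι) :
    ‖((Module.End.eigenspace X.toEuclideanLin μ).orthogonalProjectionOnto x :
        EuclideanSpace ℝ ι)‖ ^ 2 =
      ∑ i with hX.eigenvalues i = μ, ⟪hX.eigenvectorBasis i, x⟫ ^ 2 :=
  hX.eigenvectorBasis.norm_sq_orthogonalProjectionOnto _ _
    (fun i hi => (Finset.mem_filter.mp hi).2 ▸ hX.eigenvectorBasis_mem_eigenspace i)
    (fun i hi => hX.eigenvectorBasis_mem_orthogonal_eigenspace (by simpa using hi)) x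

theorem smul_one_sub_mulVec_eigenvectorBasis (x : ℝ) (i : ι) :
    (x • 1 - X) *ᵥ ⇑(hX.eigenvectorBasis i) =
      (x - hX.eigenvalues i) • ⇑(hX.eigenvectorBasis i) := by
  rw [sub_mulVec, smul_mulVec, one_mulVec, hX.mulVec_eigenvectorBasis, sub_smul]

theorem sub_eigenvalues_ne_zero {x : ℝ} (hx : IsUnit (x • (1 : Matrix ι ι ℝ) - X).det)
    (i : ι) : x - hX.eigenvalues i ≠ 0 := by
  intro h
  have hker := hX.smul_one_sub_mulVec_eigenvectorBasis x i
  rw [h, zero_smul] at hker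
  have hne : ⇑(hX.eigenvectorBasis i) ≠ 0 := by
    simpa using hX.eigenvectorBasis.orthonormal.ne_zero i
  exact hx.ne_zero (exists_mulVec_eq_zero_iff.mp ⟨_, hne, hker⟩)

theorem inv_mulVec_eigenvectorBasis {x : ℝ} (hx : IsUnit (x • (1 : Matrix ι ι ℝ) - X).det)
    (i : ι) :
    (x • 1 - X)⁻¹ *ᵥ ⇑(hX.eigenvectorBasis i) =
      (x - hX.eigenvalues i)⁻¹ • ⇑(hX.eigenvectorBasis i) := by
  have h := congrArg ((x • 1 - X)⁻¹ *ᵥ ·) (hX.smul_one_sub_mulVec_eigenvectorBasis x i)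
  simp only [mulVec_mulVec, nonsing_inv_mul _ hx, one_mulVec, mulVec_smul] at h
  conv_rhs => rw [h]
  rw [smul_smul, inv_mul_cancel₀ (hX.sub_eigenvalues_ne_zero hx i), one_smul]

theorem dotProduct_inv_mulVec {x : ℝ} (hx : IsUnit (x • (1 : Matrix ι ι ℝ) - X).det)
    (ζ : EuclideanSpace ℝ ι) :
    ζ ⬝ᵥ (x • 1 - X)⁻¹ *ᵥ ζ = ∑ i, ⟪hX.eigenvectorBasis i, ζ⟫ ^ 2 / (x - hX.eigenvalues i) := by
  conv_lhs => enter [2, 2]; rw [← hX.eigenvectorBasis.sum_repr' ζ]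
  simp only [WithLp.ofLp_sum, WithLp.ofLp_smul, mulVec_sum, mulVec_smul,
    hX.inv_mulVec_eigenvectorBasis hx, dotProduct_sum, dotProduct_smul]
  refine Finset.sum_congr rfl fun i _ => ?_
  rw [EuclideanSpace.inner_eq_star_dotProduct, star_trivial, smul_eq_mul, smul_eq_mul]
  ring

end Matrix.IsHermitian

/-- **Lemma.** If real symmetric pairs `(X, ζ)` and `(Y, η)` are Φ-cospectral, then for every
`μ ∈ ℝ` the norm of the orthogonal projection of `ζ` onto the eigenspace `ker(X − μI)` equals
the norm of the orthogonal projection of `η` onto `ker(Y − μI)`. -/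
theorem phi_cospectral_eigenprojection_norms
    {n : ℕ} (X Y : Matrix (Fin n) (Fin n) ℝ) (ζ η : EuclideanSpace ℝ (Fin n))
    (hXsymm : X.IsSymm) (hYsymm : Y.IsSymm)
    (hcospec : ∀ lam t : ℝ,
      (lam • (1 : Matrix (Fin n) (Fin n) ℝ) - X - t • vecMulVec ζ ζ).det =
      (lam • (1 : Matrix (Fin n) (Fin n) ℝ) - Y - t • vecMulVec η η).det)
    (μ : ℝ) :
    ‖(Submodule.orthogonalProjectionOnto
        (LinearMap.ker (Matrix.toEuclideanLin X - μ • LinearMap.id)) ζ : EuclideanSpace ℝ (Fin n))‖ =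
    ‖(Submodule.orthogonalProjectionOnto
        (LinearMap.ker (Matrix.toEuclideanLin Y - μ • LinearMap.id)) η : EuclideanSpace ℝ (Fin n))‖ := by
  have hX : X.IsHermitian := isHermitian_iff_isSymm.mpr hXsymm
  have hY : Y.IsHermitian := isHermitian_iff_isSymm.mpr hYsymm
  have hΦ : PhiCospectral X ζ Y η := hcospec
  have hresolvent :
      (fun x => (x - μ) * ∑ i, ⟪hX.eigenvectorBasis i, ζ⟫ ^ 2 / (x - hX.eigenvalues i))
        =ᶠ[𝓝[≠] μ]
      fun x => (x - μ) * ∑ i, ⟪hY.eigenvectorBasis i, η⟫ ^ 2 / (x - hY.eigenvalues i) := by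
    filter_upwards [X.eventually_isUnit_det_smul_one_sub μ] with x hx
    have hy : IsUnit (x • (1 : Matrix (Fin n) (Fin n) ℝ) - Y).det :=
      hΦ.det_smul_one_sub_eq x ▸ hx
    rw [← hX.dotProduct_inv_mulVec hx, ← hY.dotProduct_inv_mulVec hy,
      hΦ.dotProduct_inv_mulVec_eq hx]
  have hweights := tendsto_nhds_unique ((tendsto_sub_mul_sum_div_sub _ _ μ).congr' hresolvent)
    (tendsto_sub_mul_sum_div_sub _ _ μ)
  rw [← sq_eq_sq₀ (norm_nonneg _) (norm_nonneg _), ← Module.End.eigenspace_eq_ker_sub_smul_id,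
    ← Module.End.eigenspace_eq_ker_sub_smul_id, hX.norm_sq_orthogonalProjectionOnto_eigenspace,
    hY.norm_sq_orthogonalProjectionOnto_eigenspace, hweights]
end

section
/- Let X, Y ∈ ℤ^{n×n} be symmetric, ζ, η ∈ ℤⁿ, and let Q be a real orthogonal n×n matrix with Q X Qᵀ = Y and Q ζ = η. If det(W_{X,ζ}) ≠ 0, where W_{X,ζ} = [ζ, Xζ, …, X^{n−1}ζ] is the walk matrix, then every entry of Q is a rational number; more precisely Q = W_{Y,η} · W_{X,ζ}^{−1}. -/
open Matrix

/-- The walk matrix `[ζ, Xζ, X²ζ, …, X^{n−1}ζ]`: its `j`-th column is `X^j ζ`. -/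
def walkMatrix {n : ℕ} {R : Type*} [CommRing R]
    (X : Matrix (Fin n) (Fin n) R) (ζ : Fin n → R) : Matrix (Fin n) (Fin n) R :=
  Matrix.of fun i j => ((X ^ (j : ℕ)) *ᵥ ζ) i

lemma walkMatrix_map {n : ℕ} {R S : Type*} [CommRing R] [CommRing S] (f : R →+* S)
    (X : Matrix (Fin n) (Fin n) R) (ζ : Fin n → R) :
    (walkMatrix X ζ).map f = walkMatrix (X.map f) (f ∘ ζ) := by
  ext i j
  have hpow : (X ^ (j : ℕ)).map f = (X.map f) ^ (j : ℕ) := map_pow f.mapMatrix X (j : ℕ)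
  simp only [walkMatrix, Matrix.map_apply, Matrix.of_apply]
  rw [RingHom.map_mulVec, hpow]

/-- **Lemma.** If `X, Y` are symmetric integer matrices, `Q` is a real orthogonal matrix with
`Q X Qᵀ = Y` and `Q ζ = η`, and `det(W_{X,ζ}) ≠ 0`, then `Q` has rational entries; in fact
`Q = W_{Y,η} ⬝ W_{X,ζ}⁻¹`. -/
theorem orthogonal_is_rational_of_walk_det_ne_zero
    {n : ℕ} (X Y : Matrix (Fin n) (Fin n) ℤ) (ζ η : Fin n → ℤ)
    (hXsymm : X.IsSymm) (hYsymm : Y.IsSymm)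
    (Q : Matrix (Fin n) (Fin n) ℝ)
    (hQ : Qᵀ * Q = 1)
    (hQX : Q * X.map (Int.cast : ℤ → ℝ) * Qᵀ = Y.map (Int.cast : ℤ → ℝ))
    (hQζ : Q *ᵥ (fun i => (ζ i : ℝ)) = fun i => (η i : ℝ))
    (hdet : (walkMatrix X ζ).det ≠ 0) :
    (∀ i j, ∃ q : ℚ, Q i j = (q : ℝ)) ∧
      Q = (walkMatrix Y η).map (Int.cast : ℤ → ℝ) *
        ((walkMatrix X ζ).map (Int.cast : ℤ → ℝ))⁻¹ := by
  set A := X.map (Int.cast : ℤ → ℝ) with hA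
  set B := Y.map (Int.cast : ℤ → ℝ) with hB
  have hQQ : Q * Qᵀ = 1 := mul_eq_one_comm.mp hQ
  have hQA : Q * A = B * Q := by
    have := congrArg (· * Q) hQX
    simpa [Matrix.mul_assoc, hQ] using this
  have hpow : ∀ j : ℕ, Q * A ^ j = B ^ j * Q := by
    intro j
    induction j with
    | zero => simp
    | succ k ih =>
      rw [pow_succ, ← Matrix.mul_assoc, ih, Matrix.mul_assoc, hQA, ← Matrix.mul_assoc,
        ← pow_succ]
  -- the walk matrices over ℝ
  have hWX : (walkMatrix X ζ).map (Int.cast : ℤ → ℝ)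
      = walkMatrix A (fun i => (ζ i : ℝ)) :=
    walkMatrix_map (Int.castRingHom ℝ) X ζ
  have hWY : (walkMatrix Y η).map (Int.cast : ℤ → ℝ)
      = walkMatrix B (fun i => (η i : ℝ)) :=
    walkMatrix_map (Int.castRingHom ℝ) Y η
  have hmain : Q * (walkMatrix X ζ).map (Int.cast : ℤ → ℝ)
      = (walkMatrix Y η).map (Int.cast : ℤ → ℝ) := by
    rw [hWX, hWY]
    ext i j
    have : (Q * walkMatrix A (fun i => (ζ i : ℝ))) i j
        = (Q *ᵥ ((A ^ (j : ℕ)) *ᵥ fun i => (ζ i : ℝ))) i := by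
      simp [Matrix.mul_apply, walkMatrix, Matrix.mulVec, dotProduct]
    rw [this, Matrix.mulVec_mulVec, hpow, ← Matrix.mulVec_mulVec, hQζ]
    rfl
  have hdcast : ((walkMatrix X ζ).map (Int.cast : ℤ → ℝ)).det
      = ((walkMatrix X ζ).det : ℝ) :=
    (RingHom.map_det (Int.castRingHom ℝ) (walkMatrix X ζ)).symm
  have hdetR : ((walkMatrix X ζ).map (Int.cast : ℤ → ℝ)).det ≠ 0 := by
    rw [hdcast]; exact_mod_cast hdet
  have hunit : IsUnit ((walkMatrix X ζ).map (Int.cast : ℤ → ℝ)).det :=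
    isUnit_iff_ne_zero.mpr hdetR
  have hQeq : Q = (walkMatrix Y η).map (Int.cast : ℤ → ℝ) *
      ((walkMatrix X ζ).map (Int.cast : ℤ → ℝ))⁻¹ := by
    rw [← hmain, Matrix.mul_nonsing_inv_cancel_right _ _ hunit]
  refine ⟨?_, hQeq⟩
  -- rational version
  set WXq := (walkMatrix X ζ).map (Int.cast : ℤ → ℚ) with hWXq
  set WYq := (walkMatrix Y η).map (Int.cast : ℤ → ℚ) with hWYq
  have hmapcomp : ∀ M : Matrix (Fin n) (Fin n) ℤ,
      (M.map (Int.cast : ℤ → ℚ)).map (Rat.cast : ℚ → ℝ) = M.map (Int.cast : ℤ → ℝ) := by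
    intro M; ext i j; simp
  have hdcastQ : WXq.det = ((walkMatrix X ζ).det : ℚ) :=
    (RingHom.map_det (Int.castRingHom ℚ) (walkMatrix X ζ)).symm
  have hdetQ : IsUnit WXq.det := by
    rw [hdcastQ]
    exact isUnit_iff_ne_zero.mpr (by exact_mod_cast hdet)
  have hinvmap : (WXq⁻¹).map (Rat.cast : ℚ → ℝ)
      = ((walkMatrix X ζ).map (Int.cast : ℤ → ℝ))⁻¹ := by
    symm
    apply Matrix.inv_eq_left_inv
    have h1 : WXq⁻¹ * WXq = 1 := Matrix.nonsing_inv_mul _ hdetQ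
    have h2 : (WXq⁻¹ * WXq).map (Rat.cast : ℚ → ℝ)
        = (1 : Matrix (Fin n) (Fin n) ℚ).map (Rat.cast : ℚ → ℝ) :=
      congrArg (Matrix.map · (Rat.cast : ℚ → ℝ)) h1
    have h3 : (WXq⁻¹ * WXq).map (Rat.cast : ℚ → ℝ)
        = WXq⁻¹.map Rat.cast * WXq.map Rat.cast :=
      Matrix.map_mul (f := Rat.castHom ℝ)
    rw [h3, hmapcomp, Matrix.map_one _ (by simp) (by simp)] at h2
    exact h2
  have hQfinal : Q = (WYq * WXq⁻¹).map (Rat.cast : ℚ → ℝ) := by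
    have h3 : (WYq * WXq⁻¹).map (Rat.cast : ℚ → ℝ)
        = WYq.map Rat.cast * WXq⁻¹.map Rat.cast :=
      Matrix.map_mul (f := Rat.castHom ℝ)
    rw [h3, hmapcomp, hinvmap, hQeq]
  intro i j
  exact ⟨(WYq * WXq⁻¹) i j, by rw [hQfinal]; rfl⟩
end

section
/- Let X ∈ ℤ^{n×n} be symmetric, ζ ∈ ℤⁿ, and t ∈ ℤ. Then the walk matrices of X and of X + t·ζζᵀ with respect to ζ have equal determinants: det(W_{X + tζζᵀ, ζ}) = det(W_{X,ζ}); moreover, for every prime p, rank_p(W_{X + tζζᵀ, ζ}) = rank_p(W_{X,ζ}). -/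
open Matrix

lemma vecMulVec_mulVec' {n : ℕ} {R : Type*} [CommRing R] (a b v : Fin n → R) :
    vecMulVec a b *ᵥ v = (b ⬝ᵥ v) • a := by
  funext i
  simp [mulVec, dotProduct, vecMulVec_apply, Finset.mul_sum, mul_comm, mul_left_comm,
    Finset.sum_mul]

lemma walk_aux {n : ℕ} (X : Matrix (Fin n) (Fin n) ℤ) (ζ : Fin n → ℤ) (t : ℤ) (j : ℕ) :
    ∃ c : ℕ → ℤ, c j = 1 ∧ (∀ k, j < k → c k = 0) ∧
      ((X + t • vecMulVec ζ ζ) ^ j) *ᵥ ζ =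
        ∑ k ∈ Finset.range (j + 1), c k • ((X ^ k) *ᵥ ζ) := by
  set Y := X + t • vecMulVec ζ ζ with hY
  induction j with
  | zero =>
    refine ⟨fun k => if k = 0 then 1 else 0, rfl, ?_, by simp⟩
    intro k hk
    simp [show k ≠ 0 by omega]
  | succ j ih =>
    obtain ⟨c, hc1, hc0, hc⟩ := ih
    set v := (Y ^ j) *ᵥ ζ with hv
    set s : ℤ := t * (ζ ⬝ᵥ v) with hs
    refine ⟨fun k => if k = 0 then s else c (k - 1), by simp [hc1], ?_, ?_⟩
    · intro k hk
      have hk0 : k ≠ 0 := by omega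
      simp only [if_neg hk0]
      exact hc0 _ (by omega)
    · have hstep : (Y ^ (j + 1)) *ᵥ ζ = X *ᵥ v + s • ζ := by
        rw [pow_succ', ← Matrix.mulVec_mulVec, ← hv, hY, add_mulVec, smul_mulVec,
          vecMulVec_mulVec', smul_smul, ← hs]
      rw [hstep, hc,
        Finset.sum_range_succ' (fun x => (if x = 0 then s else c (x - 1)) • ((X ^ x) *ᵥ ζ))
          (j + 1)]
      simp only [Nat.succ_ne_zero, if_false, Nat.add_sub_cancel, if_pos rfl, pow_zero,
        one_mulVec]
      rw [show (X *ᵥ ∑ k ∈ Finset.range (j + 1), c k • ((X ^ k) *ᵥ ζ)) =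
          ∑ k ∈ Finset.range (j + 1), X *ᵥ (c k • ((X ^ k) *ᵥ ζ)) from
        map_sum X.mulVecLin _ _]
      simp only [if_true]
      congr 1
      refine Finset.sum_congr rfl fun k _ => ?_
      rw [mulVec_smul, Matrix.mulVec_mulVec, ← pow_succ']

lemma walk_factor {n : ℕ} (X : Matrix (Fin n) (Fin n) ℤ) (ζ : Fin n → ℤ) (t : ℤ) :
    ∃ U : Matrix (Fin n) (Fin n) ℤ, U.det = 1 ∧
      walkMatrix (X + t • vecMulVec ζ ζ) ζ = walkMatrix X ζ * U := by
  choose c hc1 hc0 hc using walk_aux X ζ t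
  refine ⟨Matrix.of fun k j : Fin n => c (j : ℕ) (k : ℕ), ?_, ?_⟩
  · rw [Matrix.det_of_upperTriangular]
    · exact Finset.prod_eq_one fun i _ => hc1 _
    · intro i j hij
      exact hc0 _ _ hij
  · funext i j
    show ((X + t • vecMulVec ζ ζ) ^ (j : ℕ) *ᵥ ζ) i = _
    rw [hc]
    have hsub : (∑ k ∈ Finset.range ((j : ℕ) + 1), c (j : ℕ) k • ((X ^ k) *ᵥ ζ)) =
        ∑ k ∈ Finset.range n, c (j : ℕ) k • ((X ^ k) *ᵥ ζ) := by
      refine Finset.sum_subset (Finset.range_subset_range.mpr j.isLt) fun k _ hk => ?_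
      rw [hc0 _ _ (by simpa using hk)]; simp
    rw [hsub, ← Fin.sum_univ_eq_sum_range (fun k => c (j : ℕ) k • ((X ^ k) *ᵥ ζ))]
    simp only [Finset.sum_apply, Pi.smul_apply, smul_eq_mul]
    rw [Matrix.mul_apply]
    exact Finset.sum_congr rfl fun k _ => mul_comm _ _

/-- **Lemma.** Replacing `X` by `X + t·ζζᵀ` changes neither the determinant of the walk matrix
with respect to `ζ` nor its rank modulo any prime `p`. -/
theorem walkMatrix_perturbation_det_and_rank
    {n : ℕ} (X : Matrix (Fin n) (Fin n) ℤ) (ζ : Fin n → ℤ) (hXsymm : X.IsSymm) (t : ℤ) :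
    (walkMatrix (X + t • vecMulVec ζ ζ) ζ).det = (walkMatrix X ζ).det ∧
      ∀ p : ℕ, p.Prime →
        ((walkMatrix (X + t • vecMulVec ζ ζ) ζ).map (Int.cast : ℤ → ZMod p)).rank =
          ((walkMatrix X ζ).map (Int.cast : ℤ → ZMod p)).rank := by
  obtain ⟨U, hU, hW⟩ := walk_factor X ζ t
  constructor
  · rw [hW, Matrix.det_mul, hU, mul_one]
  · intro p hp
    haveI : Fact p.Prime := ⟨hp⟩
    have hmap : (walkMatrix (X + t • vecMulVec ζ ζ) ζ).map (Int.cast : ℤ → ZMod p) =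
        (walkMatrix X ζ).map (Int.cast : ℤ → ZMod p) * U.map (Int.cast : ℤ → ZMod p) := by
      rw [show (Int.cast : ℤ → ZMod p) = ⇑(Int.castRingHom (ZMod p)) from rfl, hW,
        Matrix.map_mul]
    rw [hmap]
    refine Matrix.rank_mul_eq_left_of_isUnit_det _ _ ?_
    rw [show (Int.cast : ℤ → ZMod p) = ⇑(Int.castRingHom (ZMod p)) from rfl,
      show (U.map ⇑(Int.castRingHom (ZMod p))).det =
        (Int.castRingHom (ZMod p)) U.det from ((Int.castRingHom (ZMod p)).map_det U).symm, hU]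
    simp
end
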